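/- Let p be a prime and G a finite p-group of nilpotency class c. Then the exponent of Aut_{P(G)}(G) does not exceed p^{t²c − t}, where t = min{r,s} with exp(G/[G,G]) = p^r and exp(Z(G)) = p^s. -/

import Mathlib

/-- `P(G)`: the subgroup `γ₂(G)·G^p` for odd `p`, and `γ₂(G)·G⁴` for `p = 2`, where `G^m` is the
subgroup generated by `m`-th powers. -/
def groupP (p : ℕ) (G : Type*) [Group G] : Subgroup G :=
  commutator G ⊔ Subgroup.closure {x : G | ∃ g : G, g ^ (if p = 2 then 4 else p) = x}

/-- `Aut_N(G)`: the group of automorphisms `u` of `G` such that `x⁻¹ · u x ∈ N` for all `x`. -/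
def autSub {G : Type*} [Group G] (N : Subgroup G) : Subgroup (G ≃* G) where
  carrier := {u : G ≃* G | ∀ x : G, x⁻¹ * u x ∈ N}
  one_mem' := by
    intro x
    simpa using N.one_mem
  mul_mem' := by
    intro u v hu hv x
    have h := N.mul_mem (hv x) (hu (v x))
    simpa [MulAut.mul_apply, mul_assoc] using h
  inv_mem' := by
    intro u hu x
    have h := N.inv_mem (hu (u⁻¹ x))
    have hx : u (u⁻¹ x) = x := by
      simp [MulAut.inv_def]
    rw [hx] at h
    simpa [mul_inv_rev] using h

/-!
For `u ∈ Aut_{Z(G)}(G) ∩ Aut_{P(G)}(G)` the map `d x = x⁻¹ · u x` is a homomorphism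
`G → Z(G)` killing `[G,G]` and sending `P(G)` into `d(G)^p`. Since `d (u x) = d x · d (d x)`, all
`d (u^k x)` agree with `d x` modulo `d(G)^p`, so the telescoping product
`x⁻¹ · u^p x = ∏_{k<p} d (u^k x)` lies in `d(G)^p`. Iterating, `x⁻¹ · u^{p^j} x` is a
`p^j`-th power of a value of `d`, hence `u^{p^t} = 1`.

A general `u ∈ Aut_{P(G)}(G)` induces an element of `Aut_{P(G/Z)}(G/Z)`, and the exponent bounds
`p^r`, `p^s` pass to `G/Z`. By induction on the class, `u^{p^{t²(c-1)-t}}` acts trivially on `G/Z`,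
i.e. lies in `Aut_{Z(G)}(G)`, and one more factor `p^t` kills it. The remaining case, class one
with `t ≤ 1`, is the one where `P(G) = 1`.
-/

section Group

open Subgroup

variable {G H : Type*} [Group G] [Group H]

theorem autSub_mono {N M : Subgroup G} (h : N ≤ M) : autSub N ≤ autSub M :=
  fun _ hu x => h (hu x)

theorem autSub_bot : autSub (⊥ : Subgroup G) = ⊥ := by
  refine eq_bot_iff.mpr fun u hu => MulEquiv.ext fun x => ?_
  exact (inv_mul_eq_one.mp (mem_bot.mp (hu x))).symm

theorem map_commutator_le (f : G →* H) : (commutator G).map f ≤ commutator H := by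
  rw [map_commutator_eq]
  exact commutator_mono le_top le_top

theorem groupP_map_le (p : ℕ) (f : G →* H) : (groupP p G).map f ≤ groupP p H := by
  rw [groupP, groupP, Subgroup.map_sup, MonoidHom.map_closure]
  refine sup_le_sup (map_commutator_le f) (closure_mono ?_)
  rintro _ ⟨_, ⟨g, rfl⟩, rfl⟩
  exact ⟨f g, (map_pow f g _).symm⟩

theorem groupP_eq_bot {p : ℕ} (hcomm : commutator G = ⊥) (hpow : ∀ g : G, g ^ p = 1) :
    groupP p G = ⊥ := by
  rw [groupP, hcomm, bot_sup_eq, closure_eq_bot_iff]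
  rintro _ ⟨g, rfl⟩
  obtain ⟨k, hk⟩ : p ∣ if p = 2 then 4 else p := by split_ifs with h <;> simp [h]
  rw [hk, pow_mul, hpow, one_pow, Set.mem_singleton_iff]

theorem groupP_le_comap_range_pow {A : Type*} [CommGroup A] (p : ℕ) (f : G →* A) :
    groupP p G ≤ ((powMonoidHom p).comp f).range.comap f := by
  refine sup_le ((Abelianization.commutator_subset_ker f).trans fun g hg => ?_) ?_
  · rw [mem_comap, (MonoidHom.mem_ker).mp hg]
    exact one_mem _
  · rw [closure_le]
    rintro _ ⟨g, rfl⟩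
    refine ⟨if p = 2 then g ^ 2 else g, ?_⟩
    split_ifs with h <;> simp [h, ← pow_mul]

end Group

section Quotient

open Subgroup

variable {G : Type*} [Group G] (N : Subgroup G) [N.Characteristic]

def quotientMulAut : MulAut G →* MulAut (G ⧸ N) where
  toFun u := QuotientGroup.congr N N u (characteristic_iff_map_eq.mp inferInstance u)
  map_one' := by
    ext x
    induction x using QuotientGroup.induction_on
    rfl
  map_mul' _ _ := by
    ext x
    induction x using QuotientGroup.induction_on
    rfl

@[simp]
theorem quotientMulAut_apply_mk (u : MulAut G) (x : G) :
    quotientMulAut N u (x : G ⧸ N) = (u x : G ⧸ N) :=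
  rfl

theorem autSub_eq_ker_quotientMulAut : autSub N = (quotientMulAut N).ker := by
  ext u
  simp only [MonoidHom.mem_ker, MulEquiv.ext_iff, QuotientGroup.forall_mk]
  exact forall_congr' fun x => by
    rw [quotientMulAut_apply_mk, MulAut.one_apply, eq_comm, QuotientGroup.eq]

theorem quotientMulAut_mem_autSub {M : Subgroup G} {u : MulAut G} (hu : u ∈ autSub M) :
    quotientMulAut N u ∈ autSub (M.map (QuotientGroup.mk' N)) := by
  intro q
  induction q using QuotientGroup.induction_on with
  | H x => exact ⟨_, hu x, by simp⟩

end Quotient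

section Center

open Subgroup
open scoped commutatorElement

variable {G : Type*} [Group G]

theorem commutatorElement_pow_left_of_mem_center {z g : G} (h : ⁅z, g⁆ ∈ center G) (n : ℕ) :
    ⁅z ^ n, g⁆ = ⁅z, g⁆ ^ n := by
  induction n with
  | zero => simp
  | succ n ih =>
    have hcomm : z * ⁅z, g⁆ ^ n = ⁅z, g⁆ ^ n * z := (mem_center_iff.mp (pow_mem h n) z)
    calc ⁅z ^ (n + 1), g⁆ = z * ⁅z ^ n, g⁆ * (g * z⁻¹ * g⁻¹) := by
          simp only [commutatorElement_def, pow_succ', mul_inv_rev, mul_assoc, inv_mul_cancel_left]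
      _ = ⁅z, g⁆ ^ (n + 1) := by
          rw [ih, hcomm, pow_succ, commutatorElement_def]
          simp only [mul_assoc]

theorem pow_mem_commutator_quotient (N : Subgroup G) [N.Normal] {n : ℕ}
    (h : ∀ y : G, y ^ n ∈ commutator G) (q : G ⧸ N) : q ^ n ∈ commutator (G ⧸ N) := by
  induction q using QuotientGroup.induction_on with
  | H y => exact map_commutator_le (QuotientGroup.mk' N) ⟨_, h y, rfl⟩

theorem pow_eq_one_of_mem_center_quotient_center {n : ℕ} (h : ∀ z ∈ center G, z ^ n = 1)
    (q : G ⧸ center G) (hq : q ∈ center (G ⧸ center G)) : q ^ n = 1 := by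
  induction q using QuotientGroup.induction_on with
  | H z =>
    have hz : ∀ g, ⁅z, g⁆ ∈ center G := by
      rw [← Subgroup.mem_upperCentralSeriesStep, Subgroup.upperCentralSeriesStep_eq_comap_center]
      exact hq
    rw [← QuotientGroup.mk_pow, QuotientGroup.eq_one_iff, mem_center_iff]
    intro g
    have h1 := commutatorElement_pow_left_of_mem_center (hz g) n
    rw [h _ (hz g)] at h1
    exact (commutatorElement_eq_one_iff_mul_comm.mp h1).symm

end Center

section CentralAutomorphism

open Finset Subgroup
open scoped IsMulCommutative

variable {G : Type*} [Group G] {u : MulAut G}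

def centralDisplacement (u : MulAut G) (hu : u ∈ autSub (center G)) : G →* center G where
  toFun x := ⟨x⁻¹ * u x, hu x⟩
  map_one' := by ext; simp
  map_mul' x y := by
    ext
    have hcomm : y⁻¹ * (x⁻¹ * u x) = x⁻¹ * u x * y⁻¹ := mem_center_iff.mp (hu x) y⁻¹
    simp only [map_mul, mul_inv_rev, Subgroup.coe_mul]
    rw [mul_assoc, ← mul_assoc x⁻¹, ← mul_assoc y⁻¹, hcomm, mul_assoc, mul_assoc]

theorem coe_centralDisplacement (hu : u ∈ autSub (center G)) (x : G) :
    (centralDisplacement u hu x : G) = x⁻¹ * u x :=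
  rfl

theorem apply_eq_mul_centralDisplacement (hu : u ∈ autSub (center G)) (x : G) :
    u x = x * centralDisplacement u hu x := by
  rw [coe_centralDisplacement, mul_inv_cancel_left]

theorem centralDisplacement_apply (hu : u ∈ autSub (center G)) (x : G) :
    centralDisplacement u hu (u x) =
      centralDisplacement u hu x * centralDisplacement u hu (centralDisplacement u hu x) := by
  conv_lhs => rw [apply_eq_mul_centralDisplacement hu x]
  exact map_mul _ _ _

theorem pow_apply_eq_mul_prod_centralDisplacement (hu : u ∈ autSub (center G)) (n : ℕ) (x : G) :
    (u ^ n) x = x * ↑(∏ k ∈ range n, centralDisplacement u hu ((u ^ k) x)) := by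
  induction n with
  | zero => simp
  | succ n ih =>
    rw [pow_succ', MulAut.mul_apply, apply_eq_mul_centralDisplacement hu ((u ^ n) x),
      prod_range_succ, Subgroup.coe_mul, ← mul_assoc, ← ih]

theorem inv_mul_apply_pow_eq_one (hu : u ∈ autSub (center G)) {n : ℕ}
    (h : ∀ y : G, y ^ n ∈ commutator G) (y : G) : (y⁻¹ * u y) ^ n = 1 := by
  rw [← coe_centralDisplacement hu, ← SubgroupClass.coe_pow, ← map_pow,
    Abelianization.commutator_subset_ker _ (h y), OneMemClass.coe_one]

theorem centralDisplacement_pow_apply_mul_inv_mem {p : ℕ} (hu : u ∈ autSub (center G))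
    (huP : u ∈ autSub (groupP p G)) (k : ℕ) (x : G) :
    centralDisplacement u hu ((u ^ k) x) * (centralDisplacement u hu x)⁻¹ ∈
      ((powMonoidHom p).comp (centralDisplacement u hu)).range := by
  induction k with
  | zero => simp
  | succ k ih =>
    have hP := groupP_le_comap_range_pow p (centralDisplacement u hu) (huP ((u ^ k) x))
    rw [pow_succ', MulAut.mul_apply, centralDisplacement_apply, mul_right_comm]
    exact mul_mem ih hP

theorem exists_inv_mul_pow_apply_eq_pow {p : ℕ} (hu : u ∈ autSub (center G))
    (huP : u ∈ autSub (groupP p G)) (x : G) : ∃ y, x⁻¹ * (u ^ p) x = (y⁻¹ * u y) ^ p := by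
  set d := centralDisplacement u hu
  have hprod : ∏ k ∈ range p, d ((u ^ k) x) =
      d x ^ p * ∏ k ∈ range p, d ((u ^ k) x) * (d x)⁻¹ := by
    rw [prod_mul_distrib, prod_const, card_range, mul_left_comm, inv_pow, mul_inv_cancel, mul_one]
  have hmem : ∏ k ∈ range p, d ((u ^ k) x) ∈ ((powMonoidHom p).comp d).range := by
    rw [hprod]
    exact mul_mem ⟨x, rfl⟩
      (prod_mem fun k _ => centralDisplacement_pow_apply_mul_inv_mem hu huP k x)
  obtain ⟨y, hy⟩ := hmem
  refine ⟨y, ?_⟩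
  rw [pow_apply_eq_mul_prod_centralDisplacement hu, inv_mul_cancel_left, ← hy,
    MonoidHom.comp_apply, powMonoidHom_apply, SubgroupClass.coe_pow, coe_centralDisplacement]

theorem exists_inv_mul_pow_pow_apply_eq_pow_pow (hu : u ∈ autSub (center G))
    (huP : u ∈ autSub (groupP p G)) (j : ℕ) (x : G) :
    ∃ y, x⁻¹ * (u ^ p ^ j) x = (y⁻¹ * u y) ^ p ^ j := by
  induction j generalizing x with
  | zero => exact ⟨x, by simp⟩
  | succ j ih =>
    obtain ⟨y, hy⟩ :=
      exists_inv_mul_pow_apply_eq_pow (pow_mem hu (p ^ j)) (pow_mem huP (p ^ j)) x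
    obtain ⟨z, hz⟩ := ih y
    exact ⟨z, by rw [pow_succ, pow_mul, hy, hz, ← pow_mul, ← pow_succ]⟩

theorem pow_pow_eq_one_of_mem_autSub_center (hu : u ∈ autSub (center G))
    (huP : u ∈ autSub (groupP p G)) {j : ℕ} (h : ∀ y : G, (y⁻¹ * u y) ^ p ^ j = 1) :
    u ^ p ^ j = 1 := by
  refine MulEquiv.ext fun x => ?_
  obtain ⟨y, hy⟩ := exists_inv_mul_pow_pow_apply_eq_pow_pow hu huP j x
  rw [h] at hy
  exact (inv_mul_eq_one.mp hy).symm

end CentralAutomorphism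

theorem sq_mul_sub_add_le_sq_mul_succ_sub {t c : ℕ} (h : c ≠ 0 ∨ 2 ≤ t) :
    t ^ 2 * c - t + t ≤ t ^ 2 * (c + 1) - t := by
  have hsq : t ≤ t ^ 2 := Nat.le_self_pow two_ne_zero t
  have hexp : t ^ 2 * (c + 1) = t ^ 2 * c + t ^ 2 := by ring
  rcases h with hc | ht
  · have : t ^ 2 ≤ t ^ 2 * c := Nat.le_mul_of_pos_right _ (Nat.pos_of_ne_zero hc)
    omega
  · have : 2 * t ≤ t ^ 2 := by nlinarith
    omega

section ClassInduction

open Subgroup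

theorem pow_pow_min_eq_one {M : Type*} [Monoid M] {x : M} {p r s : ℕ} (hr : x ^ p ^ r = 1)
    (hs : x ^ p ^ s = 1) : x ^ p ^ min r s = 1 := by
  rcases le_total r s with h | h
  · rwa [min_eq_left h]
  · rwa [min_eq_right h]

variable {G : Type*} [Group G] [Group.IsNilpotent G] {p r s : ℕ}

theorem groupP_eq_bot_of_nilpotencyClass_le_one (hc : Group.nilpotencyClass G ≤ 1)
    (hr : ∀ y : G, y ^ p ^ r ∈ commutator G) (hs : ∀ z ∈ center G, z ^ p ^ s = 1)
    (ht : min r s ≤ 1) : groupP p G = ⊥ := by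
  have hcomm : commutator G = ⊥ :=
    (commutator_eq_bot_iff G).mpr (Group.IsNilpotent.nilpotencyClass_le_one_iff.mp hc)
  have hcenter : center G = ⊤ := (commutator_eq_bot_iff_center_eq_top G).mp hcomm
  refine groupP_eq_bot hcomm fun g => ?_
  obtain ⟨k, hk⟩ : p ^ min r s ∣ p := by simpa using pow_dvd_pow p ht
  have hg : g ^ p ^ min r s = 1 :=
    pow_pow_min_eq_one (mem_bot.mp (hcomm ▸ hr g)) (hs g (hcenter ▸ mem_top g))
  rw [hk, pow_mul, hg, one_pow]

theorem pow_eq_one_of_mem_autSub_groupP (c : ℕ) (hc : Group.nilpotencyClass G = c)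
    (hr : ∀ y : G, y ^ p ^ r ∈ commutator G) (hs : ∀ z ∈ center G, z ^ p ^ s = 1)
    {u : MulAut G} (hu : u ∈ autSub (groupP p G)) :
    u ^ p ^ (min r s ^ 2 * c - min r s) = 1 := by
  induction c generalizing G with
  | zero =>
    have := Group.nilpotencyClass_zero_iff_subsingleton.mp hc
    exact MulEquiv.ext fun x => Subsingleton.elim _ _
  | succ c ih =>
    by_cases hct : c ≠ 0 ∨ 2 ≤ min r s
    · have hZ : quotientMulAut (center G) u ^ p ^ (min r s ^ 2 * c - min r s) = 1 :=
        ih (by rw [Group.nilpotencyClass_quotient_center, hc, Nat.add_sub_cancel])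
          (pow_mem_commutator_quotient _ hr) (pow_eq_one_of_mem_center_quotient_center hs)
          (autSub_mono (groupP_map_le p _) (quotientMulAut_mem_autSub _ hu))
      have hv : u ^ p ^ (min r s ^ 2 * c - min r s) ∈ autSub (center G) := by
        rw [autSub_eq_ker_quotientMulAut, MonoidHom.mem_ker, map_pow, hZ]
      have hvt := pow_pow_eq_one_of_mem_autSub_center hv (pow_mem hu _)
        fun y => pow_pow_min_eq_one (inv_mul_apply_pow_eq_one hv hr y) (hs _ (hv y))
      obtain ⟨k, hk⟩ := pow_dvd_pow p (sq_mul_sub_add_le_sq_mul_succ_sub hct)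
      rw [hk, pow_add, pow_mul, pow_mul, hvt, one_pow]
    · rw [not_or, not_not, not_le] at hct
      obtain ⟨rfl, ht⟩ := hct
      rw [groupP_eq_bot_of_nilpotencyClass_le_one hc.le hr hs (Nat.lt_succ_iff.mp ht), autSub_bot,
        mem_bot] at hu
      rw [hu, one_pow]

end ClassInduction

theorem autSub_groupP_exponent_le_general (p c r s : ℕ) (hp : p.Prime) (G : Type*) [Group G]
    [Group.IsNilpotent G] (hc : Group.nilpotencyClass G = c)
    (hr : Monoid.exponent (G ⧸ commutator G) = p ^ r)
    (hs : Monoid.exponent ↥(Subgroup.center G) = p ^ s) :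
    Monoid.exponent ↥(autSub (groupP p G)) ≤ p ^ (min r s ^ 2 * c - min r s) := by
  have hr' : ∀ y : G, y ^ p ^ r ∈ commutator G := fun y => by
    rw [← QuotientGroup.eq_one_iff, QuotientGroup.mk_pow, ← hr, Monoid.pow_exponent_eq_one]
  have hs' : ∀ z ∈ Subgroup.center G, z ^ p ^ s = 1 := fun z hz => by
    rw [← hs]
    exact congrArg Subtype.val (Monoid.pow_exponent_eq_one (⟨z, hz⟩ : Subgroup.center G))
  refine Nat.le_of_dvd (pow_pos hp.pos _) (Monoid.exponent_dvd_of_forall_pow_eq_one fun u => ?_)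
  exact Subtype.ext (pow_eq_one_of_mem_autSub_groupP c hc hr' hs' u.2)

/-- **Theorem C (first part).** Let `G` be a finite `p`-group of class `c`. Then the exponent of
`Aut_{P(G)}(G)` does not exceed `p ^ (t²c - t)`, where `t = min r s`, `exp(G/[G,G]) = p ^ r` and
`exp(Z(G)) = p ^ s`. -/
theorem autSub_groupP_exponent_le (p c r s : ℕ) (hp : p.Prime) (G : Type*) [Group G] [Finite G]
    (hG : IsPGroup p G) [Group.IsNilpotent G] (hc : Group.nilpotencyClass G = c)
    (hr : Monoid.exponent (G ⧸ commutator G) = p ^ r)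
    (hs : Monoid.exponent ↥(Subgroup.center G) = p ^ s) :
    Monoid.exponent ↥(autSub (groupP p G)) ≤ p ^ (min r s ^ 2 * c - min r s) :=
  autSub_groupP_exponent_le_general p c r s hp G hc hr hs
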